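/- Weighted Cauchy–Schwarz bound showing the cutoff energy is controlled: let u be Hölder continuous with |u(x)| ≤ C dist(x, Λ)^s near a closed set Λ ⊆ R^{n-1}×{0}, where s = (1-a)/2 and -1 < a < 1. Define η_k(x) = min(1, max(0, k·dist(x,Λ) - 1)). Then ∫_{B ∩ {dist(x,Λ) ≤ 2/k}} |x_n|^a u² |∇η_k|² dx ≤ C' for a constant C' independent of k. -/

import Mathlib

/-!
On `{dist(x, Λ) ≤ δ}` with `δ = 2/k` the cutoff is `k`-Lipschitz and `u² ≤ C² δ^(1-a)`, so the
integrand is at most `C² δ^(1-a) k² |x_n|^a`. Since `Λ` lies in `{x_n = 0}`, that set is contained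
in the slab `{|x_n| ≤ δ}`, and over `B ∩ {|x_n| ≤ δ}` the weight `|x_n|^a` integrates (via the box
containing `B` and Fubini) to `O(δ^(1+a))`. The product `δ^(1-a) k² δ^(1+a) = (δ k)² = 4` does not
depend on `k`.
-/

open MeasureTheory Metric Set

theorem sq_le_mul_rpow_of_abs_le {v C d δ p : ℝ} (hv : |v| ≤ C * d ^ (p / 2)) (hd : 0 ≤ d)
    (hdδ : d ≤ δ) (hp : 0 ≤ p) : v ^ 2 ≤ C ^ 2 * δ ^ p := by
  calc v ^ 2 = |v| ^ 2 := (sq_abs v).symm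
    _ ≤ (C * d ^ (p / 2)) ^ 2 := pow_le_pow_left₀ (abs_nonneg v) hv 2
    _ = C ^ 2 * d ^ p := by
      rw [mul_pow, ← Real.rpow_natCast (d ^ (p / 2)), ← Real.rpow_mul hd]
      norm_num
    _ ≤ C ^ 2 * δ ^ p := by gcongr

theorem setIntegral_le_mul_setIntegral {α : Type*} [MeasurableSpace α] {μ : Measure α}
    {f w : α → ℝ} {s t : Set α} {M : ℝ} (hs : MeasurableSet s) (hst : s ⊆ t)
    (hw : IntegrableOn w t μ) (hM : 0 ≤ M) (hf0 : 0 ≤ f) (hw0 : 0 ≤ w)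
    (hfw : ∀ x ∈ s, f x ≤ M * w x) : ∫ x in s, f x ∂μ ≤ M * ∫ x in t, w x ∂μ :=
  calc ∫ x in s, f x ∂μ ≤ ∫ x in s, M * w x ∂μ :=
        integral_mono_of_nonneg (ae_of_all _ hf0) ((hw.mono_set hst).const_mul M)
          (ae_restrict_of_forall_mem hs hfw)
    _ ≤ ∫ x in t, M * w x ∂μ :=
        setIntegral_mono_set (hw.const_mul M) (ae_of_all _ fun x => mul_nonneg hM (hw0 x))
          hst.eventuallyLE
    _ = M * ∫ x in t, w x ∂μ := integral_const_mul M _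

theorem norm_fderiv_min_one_max_zero_infDist_le {E : Type*} [NormedAddCommGroup E]
    [NormedSpace ℝ E] (Λ : Set E) {k : ℝ} (hk : 0 ≤ k) (x : E) :
    ‖fderiv ℝ (fun y => min 1 (max 0 (k * infDist y Λ - 1))) x‖ ≤ k := by
  have hcut : LipschitzWith 1 fun t : ℝ => min 1 (max 0 (t - 1)) :=
    ((IsometryEquiv.subRight (1 : ℝ)).isometry.lipschitz.const_max 0).const_min 1
  have hdist := (lipschitzWith_smul k).comp (lipschitz_infDist_pt Λ)
  calc _ ≤ ((1 * (‖k‖₊ * 1) : NNReal) : ℝ) := norm_fderiv_le_of_lipschitz ℝ (hcut.comp hdist)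
    _ = k := by simp [abs_of_nonneg hk]

theorem EuclideanSpace.abs_apply_le_infDist {ι : Type*} [Fintype ι]
    {Λ : Set (EuclideanSpace ℝ ι)} (hne : Λ.Nonempty) {i : ι} (hΛ : Λ ⊆ {x | x i = 0})
    (x : EuclideanSpace ℝ ι) : |x i| ≤ infDist x Λ :=
  (le_infDist hne).2 fun y hy => by
    simpa [Real.dist_eq, show y i = 0 from hΛ hy] using PiLp.dist_apply_le x y i

theorem intervalIntegrable_abs_rpow {a : ℝ} (ha : -1 < a) (b c : ℝ) :
    IntervalIntegrable (fun t => |t| ^ a) volume b c := by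
  have hpos : ∀ c, 0 ≤ c → IntervalIntegrable (fun t => |t| ^ a) volume 0 c := fun c hc => by
    have h := intervalIntegral.intervalIntegrable_rpow' (a := 0) (b := c) ha
    rw [intervalIntegrable_iff, uIoc_of_le hc] at h ⊢
    exact h.congr_fun (fun t ht => by simp [abs_of_pos ht.1]) measurableSet_Ioc
  have hzero : ∀ c, IntervalIntegrable (fun t => |t| ^ a) volume 0 c := fun c => by
    rcases le_total 0 c with hc | hc
    · exact hpos c hc
    · rw [IntervalIntegrable.iff_comp_neg]
      simpa using (hpos (-c) (neg_nonneg.2 hc))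
  exact (hzero b).symm.trans (hzero c)

theorem integral_Icc_abs_rpow {a δ : ℝ} (ha : -1 < a) (hδ : 0 ≤ δ) :
    ∫ t in Icc (-δ) δ, |t| ^ a = 2 * δ ^ (a + 1) / (a + 1) := by
  have hhalf : ∫ t in (0 : ℝ)..δ, |t| ^ a = δ ^ (a + 1) / (a + 1) := by
    rw [intervalIntegral.integral_congr (g := fun t => t ^ a) fun t ht => by
        rw [uIcc_of_le hδ] at ht; simp [abs_of_nonneg ht.1],
      integral_rpow (Or.inl ha), Real.zero_rpow (by linarith), sub_zero]
  have hneg : ∫ t in (-δ)..0, |t| ^ a = ∫ t in (0 : ℝ)..δ, |t| ^ a := by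
    simpa using (intervalIntegral.integral_comp_neg (a := 0) (b := δ) fun t => |t| ^ a).symm
  rw [integral_Icc_eq_integral_Ioc, ← intervalIntegral.integral_of_le (by linarith),
    ← intervalIntegral.integral_add_adjacent_intervals (intervalIntegrable_abs_rpow ha _ _)
      (intervalIntegrable_abs_rpow ha _ _), hneg, hhalf]
  ring

namespace EuclideanSpace

variable {ι : Type*} [Fintype ι]

theorem integrable_prod_apply {f : ι → ℝ → ℝ} (hf : ∀ i, Integrable (f i)) :
    Integrable fun x : EuclideanSpace ℝ ι => ∏ i, f i (x i) :=
  ((volume_preserving_symm_measurableEquiv_toLp ι).integrable_comp_emb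
    (MeasurableEquiv.toLp 2 (ι → ℝ)).symm.measurableEmbedding).2 (Integrable.fintype_prod_dep hf)

theorem integral_prod_apply (f : ι → ℝ → ℝ) :
    ∫ x : EuclideanSpace ℝ ι, ∏ i, f i (x i) = ∏ i, ∫ t, f i t := by
  rw [← integral_fintype_prod_volume_eq_prod,
    ← (volume_preserving_symm_measurableEquiv_toLp ι).integral_comp']
  rfl

end EuclideanSpace

section Slab

variable {ι : Type*} [DecidableEq ι] (x₀ : EuclideanSpace ℝ ι) (R δ a : ℝ) (l : ι)

/-- The ball lies in the box `∏ i, [x₀ i - R, x₀ i + R]`, so on `ball x₀ R ∩ {|x l| ≤ δ}` the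
weight `|x l| ^ a` is dominated by the product of these one-dimensional factors, whose integral
factorizes. -/
noncomputable def slabFactor (i : ι) : ℝ → ℝ :=
  if i = l then (Icc (-δ) δ).indicator fun t => |t| ^ a
  else (Icc (x₀ i - R) (x₀ i + R)).indicator 1

variable {x₀ R δ a l}

theorem slabFactor_nonneg (i : ι) (t : ℝ) : 0 ≤ slabFactor x₀ R δ a l i t := by
  unfold slabFactor
  split_ifs
  · exact indicator_nonneg (fun t _ => by positivity) t
  · exact indicator_nonneg (fun t _ => zero_le_one) t

theorem integrable_slabFactor (ha : -1 < a) (i : ι) : Integrable (slabFactor x₀ R δ a l i) := by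
  unfold slabFactor
  split_ifs
  · rw [integrable_indicator_iff measurableSet_Icc, integrableOn_Icc_iff_integrableOn_Ioc]
    rcases le_total (-δ) δ with hδ | hδ
    · exact (intervalIntegrable_iff_integrableOn_Ioc_of_le hδ).1
        (intervalIntegrable_abs_rpow ha _ _)
    · simp [Ioc_eq_empty_of_le hδ]
  · exact (integrable_indicator_iff measurableSet_Icc).2 (integrableOn_const measure_Icc_lt_top.ne)

theorem integral_slabFactor (ha : -1 < a) (hR : 0 ≤ R) (hδ : 0 ≤ δ) (i : ι) :
    ∫ t, slabFactor x₀ R δ a l i t = if i = l then 2 * δ ^ (a + 1) / (a + 1) else 2 * R := by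
  unfold slabFactor
  split_ifs
  · rw [integral_indicator measurableSet_Icc, integral_Icc_abs_rpow ha hδ]
  · rw [integral_indicator measurableSet_Icc, Pi.one_def, setIntegral_const, measureReal_def,
      Real.volume_Icc, ENNReal.toReal_ofReal (by linarith), smul_eq_mul, mul_one]
    ring

theorem indicator_abs_rpow_le_prod_slabFactor [Fintype ι] (x : EuclideanSpace ℝ ι) :
    (ball x₀ R ∩ {x | |x l| ≤ δ}).indicator (fun x => |x l| ^ a) x ≤
      ∏ i, slabFactor x₀ R δ a l i (x i) := by
  by_cases hx : x ∈ ball x₀ R ∩ {x | |x l| ≤ δ}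
  · rw [indicator_of_mem hx, Finset.prod_eq_single l]
    · rw [slabFactor, if_pos rfl, indicator_of_mem (s := Icc (-δ) δ) (abs_le.1 (hx.2 : |x l| ≤ δ))]
    · intro i _ hi
      have hxi : |x i - x₀ i| < R :=
        (PiLp.dist_apply_le x x₀ i).trans_lt (mem_ball.1 hx.1)
      have : x i ∈ Icc (x₀ i - R) (x₀ i + R) := by
        constructor <;> linarith [abs_lt.1 hxi]
      simp [slabFactor, hi, indicator_of_mem this]
    · simp
  · rw [indicator_of_notMem hx]
    exact Finset.prod_nonneg fun i _ => slabFactor_nonneg i (x i)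

end Slab

section SlabIntegral

variable {ι : Type*} [Fintype ι] {x₀ : EuclideanSpace ℝ ι} {R δ a : ℝ} {l : ι}

theorem measurableSet_ball_inter_slab :
    MeasurableSet (ball x₀ R ∩ {x : EuclideanSpace ℝ ι | |x l| ≤ δ}) :=
  measurableSet_ball.inter (measurableSet_le (by fun_prop) measurable_const)

theorem integrableOn_abs_rpow_ball_inter_slab (ha : -1 < a) :
    IntegrableOn (fun x : EuclideanSpace ℝ ι => |x l| ^ a) (ball x₀ R ∩ {x | |x l| ≤ δ}) := by
  classical
  rw [← integrable_indicator_iff measurableSet_ball_inter_slab]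
  refine (EuclideanSpace.integrable_prod_apply
    (integrable_slabFactor (x₀ := x₀) (R := R) (δ := δ) (l := l) ha)).mono'
    ((Measurable.indicator (by fun_prop) measurableSet_ball_inter_slab).aestronglyMeasurable)
    (ae_of_all _ fun x => ?_)
  rw [Real.norm_of_nonneg (indicator_nonneg (fun x _ => by positivity) x)]
  exact indicator_abs_rpow_le_prod_slabFactor x

theorem setIntegral_abs_rpow_ball_inter_slab_le (ha : -1 < a) (hR : 0 ≤ R) (hδ : 0 ≤ δ) :
    ∫ x in ball x₀ R ∩ {x | |x l| ≤ δ}, |x l| ^ a ≤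
      δ ^ (a + 1) * (2 * (2 * R) ^ (Fintype.card ι - 1) / (a + 1)) := by
  classical
  rw [← integral_indicator measurableSet_ball_inter_slab]
  calc _ ≤ ∫ x : EuclideanSpace ℝ ι, ∏ i, slabFactor x₀ R δ a l i (x i) :=
        integral_mono_of_nonneg (ae_of_all _ (indicator_nonneg fun x _ => by positivity))
          (EuclideanSpace.integrable_prod_apply (integrable_slabFactor ha))
          (ae_of_all _ indicator_abs_rpow_le_prod_slabFactor)
    _ = ∏ i, if i = l then 2 * δ ^ (a + 1) / (a + 1) else 2 * R := by
        rw [EuclideanSpace.integral_prod_apply]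
        exact Finset.prod_congr rfl fun i _ => integral_slabFactor ha hR hδ i
    _ = δ ^ (a + 1) * (2 * (2 * R) ^ (Fintype.card ι - 1) / (a + 1)) := by
        rw [Fintype.prod_eq_mul_prod_compl l, if_pos rfl,
          Finset.prod_congr rfl fun i hi => if_neg (Finset.mem_compl.1 hi ∘ Finset.mem_singleton.2),
          Finset.prod_const, Finset.card_compl, Finset.card_singleton]
        ring

end SlabIntegral

theorem stmt14_general (n : ℕ) (a : ℝ) (ha : -1 < a) (ha' : a < 1)
    (Λ : Set (EuclideanSpace ℝ (Fin (n + 1)))) (hΛne : Λ.Nonempty)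
    (hΛ : Λ ⊆ {x | x (Fin.last n) = 0})
    (x₀ : EuclideanSpace ℝ (Fin (n + 1))) (R : ℝ) (hR : 0 < R)
    (u : EuclideanSpace ℝ (Fin (n + 1)) → ℝ)
    (C : ℝ)
    (hu : ∀ x ∈ ball x₀ R, |u x| ≤ C * (Metric.infDist x Λ) ^ ((1 - a) / 2)) :
    ∃ C' : ℝ, ∀ k : ℕ, 1 ≤ k →
      (∫ x in ball x₀ R ∩ {x | Metric.infDist x Λ ≤ 2 / (k : ℝ)},
          |x (Fin.last n)| ^ a * (u x) ^ 2 *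
            ‖fderiv ℝ (fun y => min 1 (max 0 ((k : ℝ) * Metric.infDist y Λ - 1))) x‖ ^ 2) ≤
        C' := by
  refine ⟨4 * C ^ 2 * (2 * (2 * R) ^ n / (a + 1)), fun k hk => ?_⟩
  have hk0 : (0 : ℝ) < k := by exact_mod_cast hk
  set δ : ℝ := 2 / (k : ℝ) with hδ
  have hδ0 : 0 < δ := by positivity
  have hST : ball x₀ R ∩ {x | infDist x Λ ≤ δ} ⊆ ball x₀ R ∩ {x | |x (Fin.last n)| ≤ δ} :=
    fun x hx => ⟨hx.1, (EuclideanSpace.abs_apply_le_infDist hΛne hΛ x).trans hx.2⟩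
  have hpt : ∀ x ∈ ball x₀ R ∩ {x | infDist x Λ ≤ δ}, |x (Fin.last n)| ^ a * (u x) ^ 2 *
      ‖fderiv ℝ (fun y => min 1 (max 0 ((k : ℝ) * infDist y Λ - 1))) x‖ ^ 2 ≤
        C ^ 2 * δ ^ (1 - a) * k ^ 2 * |x (Fin.last n)| ^ a := fun x hx => by
    have hu2 := sq_le_mul_rpow_of_abs_le (hu x hx.1) infDist_nonneg hx.2 (by linarith)
    have hgrad := norm_fderiv_min_one_max_zero_infDist_le Λ hk0.le x
    calc _ ≤ |x (Fin.last n)| ^ a * (C ^ 2 * δ ^ (1 - a)) * (k : ℝ) ^ 2 := by gcongr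
      _ = _ := by ring
  have hpow : δ ^ (1 - a) * δ ^ (a + 1) = δ ^ 2 := by
    rw [← Real.rpow_add hδ0, show 1 - a + (a + 1) = (2 : ℝ) by ring, Real.rpow_two]
  have hδk : δ * k = 2 := by rw [hδ]; field_simp
  calc _ ≤ C ^ 2 * δ ^ (1 - a) * k ^ 2 *
        ∫ x in ball x₀ R ∩ {x | |x (Fin.last n)| ≤ δ}, |x (Fin.last n)| ^ a :=
        setIntegral_le_mul_setIntegral
          (measurableSet_ball.inter (measurableSet_le (by fun_prop) measurable_const)) hST
          (integrableOn_abs_rpow_ball_inter_slab ha) (by positivity) (fun x => by positivity)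
          (fun x => by positivity) hpt
    _ ≤ C ^ 2 * δ ^ (1 - a) * k ^ 2 * (δ ^ (a + 1) * (2 * (2 * R) ^ n / (a + 1))) := by
        gcongr
        simpa using setIntegral_abs_rpow_ball_inter_slab_le (l := Fin.last n) ha hR.le hδ0.le
    _ = 4 * C ^ 2 * (2 * (2 * R) ^ n / (a + 1)) := by
        linear_combination (C ^ 2 * k ^ 2 * (2 * (2 * R) ^ n / (a + 1))) * hpow +
          (C ^ 2 * (2 * (2 * R) ^ n / (a + 1)) * (δ * k + 2)) * hδk

/-- uniform bound on the cutoff energy: let `Λ` be a nonempty closed subset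
of the thin space `{x_n = 0}` in `ℝᴺ` (ambient dimension `N = n+1`), `-1 < a < 1`,
`s = (1-a)/2`, and let `u` satisfy `|u(x)| ≤ C dist(x,Λ)^s` on a fixed ball `B`. With the
cutoff `η_k(x) = min(1, max(0, k·dist(x,Λ) - 1))`, the weighted integrals
`∫_{B ∩ {dist(x,Λ) ≤ 2/k}} |x_n|^a u² |∇η_k|² dx` are bounded by a constant `C'`
independent of `k`. -/
theorem stmt14 (n : ℕ) (a : ℝ) (ha : -1 < a) (ha' : a < 1)
    (Λ : Set (EuclideanSpace ℝ (Fin (n + 1)))) (hΛc : IsClosed Λ) (hΛne : Λ.Nonempty)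
    (hΛ : Λ ⊆ {x | x (Fin.last n) = 0})
    (x₀ : EuclideanSpace ℝ (Fin (n + 1))) (R : ℝ) (hR : 0 < R)
    (u : EuclideanSpace ℝ (Fin (n + 1)) → ℝ) (hum : Measurable u)
    (C : ℝ) (hC : 0 < C)
    (hu : ∀ x ∈ ball x₀ R, |u x| ≤ C * (Metric.infDist x Λ) ^ ((1 - a) / 2)) :
    ∃ C' : ℝ, ∀ k : ℕ, 1 ≤ k →
      (∫ x in ball x₀ R ∩ {x | Metric.infDist x Λ ≤ 2 / (k : ℝ)},
          |x (Fin.last n)| ^ a * (u x) ^ 2 *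
            ‖fderiv ℝ (fun y => min 1 (max 0 ((k : ℝ) * Metric.infDist y Λ - 1))) x‖ ^ 2) ≤
        C' :=
  stmt14_general n a ha ha' Λ hΛne hΛ x₀ R hR u C hu
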